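/- With aligned preferences (all firms rank workers w_1 ≻ ... ≻ w_n, all workers rank firms f_1 ≻ ... ≻ f_n) and k = 1, the complete locally stable matching with respect to G is unique if and only if the path w_1 - w_2 - ... - w_n is a path in G (each consecutive pair is an edge of G). -/

import Mathlib

/-!
Swapping two consecutive workers `i ⋖ j` yields a matching whose only blocking pair is
`(i, f_i)`, and firm `f_i` then employs `j`; so this swap is locally stable exactly when
`i` and `j` are not adjacent. Conversely, if every consecutive pair is an edge and `μ ≠ 1`,
let `w` be the least worker with `μ w ≠ f_w`; firm `f_w` employs some `w' > w`, and the
worker `v ⋖ w'` blocks together with `f_w` while being adjacent to `w'`.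
-/

variable {α : Type*} [LinearOrder α]

/-- Workers and firms are both indexed by `α`, smaller meaning more preferred; `μ w` is the
firm of worker `w` and `μ.symm f` the worker of firm `f`, the only possible neighbour of `w`
at `f` since each firm has one position. -/
def IsLocallyStable (G : SimpleGraph α) (μ : Equiv.Perm α) : Prop :=
  ∀ w f : α, f < μ w → w < μ.symm f → ¬ G.Adj w (μ.symm f)

variable {G : SimpleGraph α}

theorem isLocallyStable_one : IsLocallyStable G 1 :=
  fun _ _ hf hw => absurd (hf.trans hw) (lt_irrefl _)

theorem isLocallyStable_swap_of_covBy {i j : α} (hij : i ⋖ j) (hadj : ¬ G.Adj i j) :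
    IsLocallyStable G (Equiv.swap i j) := by
  intro w f hf hw
  rw [Equiv.symm_swap] at hw ⊢
  have hlt := hij.lt
  have hbetween := hij.2
  rw [Equiv.swap_apply_def] at hf hw ⊢
  split_ifs at hf hw ⊢ <;> subst_vars
  all_goals first
    | assumption
    | exfalso; first | order | exact hbetween hf hw | exact hbetween hw hf

theorem IsLocallyStable.apply_eq_of_forall_lt [IsStronglyCoatomic α]
    (hpath : ∀ v w : α, v ⋖ w → G.Adj v w) {μ : Equiv.Perm α} (hμ : IsLocallyStable G μ)
    {w : α} (hbelow : ∀ v < w, μ v = v) : μ w = w := by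
  by_contra hw
  obtain ⟨w', hμw'⟩ : ∃ w', μ w' = w := μ.surjective w
  have hww' : w < w' := by
    rcases lt_trichotomy w w' with h | rfl | h
    · exact h
    · exact absurd hμw' hw
    · exact absurd ((hbelow w' h).symm.trans hμw') h.ne
  obtain ⟨v, hwv, hvw'⟩ := exists_le_covBy_of_lt hww'
  have hμv : w < μ v := by
    rcases lt_trichotomy w (μ v) with h | h | h
    · exact h
    · exact absurd (μ.injective (hμw'.trans h)) hvw'.ne'
    · exact absurd (μ.injective (hbelow _ h) ▸ h) (not_lt.mpr hwv)
  have hw' : μ.symm w = w' := μ.symm_apply_eq.mpr hμw'.symm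
  refine hμ v w hμv ?_ ?_ <;> rw [hw']
  exacts [hvw'.lt, hpath v w' hvw']

theorem IsLocallyStable.eq_one [IsStronglyCoatomic α] [WellFoundedLT α]
    (hpath : ∀ v w : α, v ⋖ w → G.Adj v w) {μ : Equiv.Perm α} (hμ : IsLocallyStable G μ) :
    μ = 1 :=
  Equiv.ext fun w => WellFoundedLT.induction (motive := fun w => μ w = w) w
    fun _ => hμ.apply_eq_of_forall_lt hpath

theorem existsUnique_isLocallyStable_iff [IsStronglyCoatomic α] [WellFoundedLT α] :
    (∃! μ : Equiv.Perm α, IsLocallyStable G μ) ↔ ∀ v w : α, v ⋖ w → G.Adj v w := by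
  refine ⟨fun ⟨μ, _, huniq⟩ v w hvw => ?_,
    fun hpath => ⟨1, isLocallyStable_one, fun _ hμ => hμ.eq_one hpath⟩⟩
  by_contra hadj
  have hswap : Equiv.swap v w = 1 :=
    (huniq _ (isLocallyStable_swap_of_covBy hvw hadj)).trans (huniq _ isLocallyStable_one).symm
  exact hvw.ne (Equiv.swap_eq_one_iff.mp hswap)

theorem Fin.forall_covBy_iff {n : ℕ} {p : Fin n → Fin n → Prop} :
    (∀ v w : Fin n, v ⋖ w → p v w) ↔ ∀ (i : Fin n) (h : i.1 + 1 < n), p i ⟨i.1 + 1, h⟩ := by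
  refine ⟨fun hp i h => hp _ _ (Fin.covBy_iff.mpr (Nat.covBy_iff_add_one_eq.mpr rfl)),
    fun hp v w hvw => ?_⟩
  have hsucc : v.1 + 1 = w.1 := Nat.covBy_iff_add_one_eq.mp (Fin.covBy_iff.mp hvw)
  obtain ⟨w, hw⟩ := w
  obtain rfl : v.1 + 1 = w := hsucc
  exact hp v hw

/-- With aligned preferences and `k = 1`, the complete locally stable matching
w.r.t. `G` is unique iff `w_1 - w_2 - ⋯ - w_n` is a path in `G`. Workers and
firms are indexed by `Fin n` with the common rankings given by the index order;
a complete matching is a permutation `μ` sending workers to firms. -/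
theorem unique_locally_stable_iff_path
    (n : ℕ) (G : SimpleGraph (Fin n)) :
    (∃! μ : Equiv.Perm (Fin n),
        ∀ w f : Fin n, f < μ w → w < μ.symm f → ¬ G.Adj w (μ.symm f)) ↔
    (∀ i : Fin n, ∀ h : i.1 + 1 < n, G.Adj i ⟨i.1 + 1, h⟩) :=
  existsUnique_isLocallyStable_iff.trans Fin.forall_covBy_iff
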